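/- arXiv:2108.03092 — 3 statements merged into one kernel-verified Lean document; each statement's English description precedes it below -/
import Mathlib

section
/- With M and U as in the spin representation, the map s ↦ (1/2) Mᵀ (s + U) is a bijection from {-1,1}^{Nα} onto {0, 1, ..., 2^α - 1}^N. -/
/-!
Index the spins by pairs `(l, j) ∈ Fin N × Fin α`, block `l` and bit `j`. The affine change
`s = 2b - 1` turns spin configurations into bit arrays `b`, and then `(1/2) Mᵀ (s + U)` has
`l`-th entry `∑ⱼ 2ʲ b(l, j)`, the number with binary digits `b(l, ·)`. Binary expansion
`(Fin α → Fin 2) ≃ Fin (2 ^ α)` is a bijection, so the map is one blockwise.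
-/

open Matrix

/-- The block binary-encoding matrix `M ∈ ℝ^{(Nα)×N}`. -/
def encodingMatrix (N α : ℕ) : Matrix (Fin (N * α)) (Fin N) ℝ :=
  fun k l => if (l : ℕ) * α ≤ (k : ℕ) ∧ (k : ℕ) < (l : ℕ) * α + α
    then 2 ^ ((k : ℕ) - (l : ℕ) * α) else 0

open Set Function

theorem Set.bijOn_range_of_comp_eq {α β γ δ : Type*} {f : α → β} {g : γ → α} {h : δ → β}
    (e : γ ≃ δ) (hh : Injective h) (hfg : f ∘ g = h ∘ e) : BijOn f (range g) (range h) := by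
  have hfg' (c : γ) : f (g c) = h (e c) := congrFun hfg c
  refine ⟨?_, ?_, ?_⟩
  · rintro _ ⟨c, rfl⟩
    exact ⟨e c, (hfg' c).symm⟩
  · rintro _ ⟨c, rfl⟩ _ ⟨c', rfl⟩ hcc'
    rw [hfg', hfg', hh.eq_iff, e.apply_eq_iff_eq] at hcc'
    rw [hcc']
  · rintro _ ⟨d, rfl⟩
    exact ⟨g (e.symm d), mem_range_self _, by rw [hfg', e.apply_symm_apply]⟩

section Encoding

variable {N α : ℕ}

theorem encodingMatrix_finProdFinEquiv (l' l : Fin N) (j : Fin α) :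
    encodingMatrix N α (finProdFinEquiv (l', j)) l = if l' = l then 2 ^ (j : ℕ) else 0 := by
  have hj := j.isLt
  have hblock : ((l : ℕ) * α ≤ j + α * l' ∧ j + α * l' < l * α + α) ↔ l' = l := by
    constructor
    · rintro ⟨h1, h2⟩
      by_contra hl
      rcases Nat.lt_or_gt_of_ne (Fin.val_ne_of_ne hl) with h | h <;> nlinarith
    · rintro rfl
      constructor <;> nlinarith
  simp only [encodingMatrix, finProdFinEquiv, Equiv.coe_fn_mk, hblock]
  split_ifs with hl
  · rw [hl, Nat.mul_comm, Nat.add_sub_cancel]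
  · rfl

theorem encodingMatrix_transpose_mulVec_apply (v : Fin (N * α) → ℝ) (l : Fin N) :
    ((encodingMatrix N α)ᵀ *ᵥ v) l = ∑ j : Fin α, 2 ^ (j : ℕ) * v (finProdFinEquiv (l, j)) := by
  simp only [mulVec, dotProduct, transpose_apply]
  rw [← finProdFinEquiv.sum_comp, Fintype.sum_prod_type]
  simp [encodingMatrix_finProdFinEquiv]

def spinOfBits (b : Fin N → Fin α → Fin 2) : Fin (N * α) → ℝ :=
  fun k => 2 * ((uncurry b (finProdFinEquiv.symm k)).val : ℝ) - 1

@[simp]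
theorem spinOfBits_finProdFinEquiv (b : Fin N → Fin α → Fin 2) (l : Fin N) (j : Fin α) :
    spinOfBits b (finProdFinEquiv (l, j)) = 2 * (b l j : ℝ) - 1 := by
  simp [spinOfBits]

theorem range_spinOfBits :
    range (spinOfBits (N := N) (α := α)) = {s | ∀ k, s k = -1 ∨ s k = 1} := by
  ext s
  constructor
  · rintro ⟨b, rfl⟩ k
    simp only [spinOfBits]
    generalize uncurry b (finProdFinEquiv.symm k) = x
    fin_cases x <;> norm_num
  · intro hs
    refine ⟨fun l j => if s (finProdFinEquiv (l, j)) = 1 then 1 else 0, funext fun k => ?_⟩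
    obtain ⟨⟨l, j⟩, rfl⟩ := finProdFinEquiv.surjective k
    rcases hs (finProdFinEquiv (l, j)) with h | h <;> norm_num [h]

theorem smul_mulVec_spinOfBits (b : Fin N → Fin α → Fin 2) :
    (1 / 2 : ℝ) • (encodingMatrix N α)ᵀ *ᵥ (spinOfBits b + fun _ => 1)
      = fun l => ((finFunctionFinEquiv (b l) : ℕ) : ℝ) := by
  funext l
  rw [Pi.smul_apply, encodingMatrix_transpose_mulVec_apply, finFunctionFinEquiv_apply, smul_eq_mul,
    Finset.mul_sum]
  push_cast
  refine Finset.sum_congr rfl fun j _ => ?_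
  simp only [Pi.add_apply, spinOfBits_finProdFinEquiv]
  ring

end Encoding

theorem range_fun_fin_cast {ι : Type*} {n : ℕ} (hn : 0 < n) :
    range (fun (m : ι → Fin n) i => ((m i : ℕ) : ℝ))
      = {w | ∀ i, ∃ m : ℕ, m ≤ n - 1 ∧ w i = (m : ℝ)} := by
  ext w
  constructor
  · rintro ⟨m, rfl⟩ i
    exact ⟨m i, by have := (m i).isLt; omega, rfl⟩
  · intro hw
    choose m hm hmw using hw
    exact ⟨fun i => ⟨m i, by have := hm i; omega⟩, funext fun i => (hmw i).symm⟩

theorem injective_fun_fin_cast {ι : Type*} {n : ℕ} :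
    Injective (fun (m : ι → Fin n) i => ((m i : ℕ) : ℝ)) :=
  fun _ _ h => funext fun i => Fin.ext (Nat.cast_injective (congrFun h i))

theorem spin_map_bijective_general (N α : ℕ) :
    Set.BijOn
      (fun s : Fin (N * α) → ℝ =>
        (1 / 2 : ℝ) • (encodingMatrix N α)ᵀ.mulVec (s + fun _ => 1))
      {s | ∀ k, s k = -1 ∨ s k = 1}
      {w | ∀ i, ∃ m : ℕ, m ≤ 2 ^ α - 1 ∧ w i = (m : ℝ)} := by
  rw [← range_spinOfBits, ← range_fun_fin_cast (Nat.two_pow_pos α)]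
  exact bijOn_range_of_comp_eq (Equiv.piCongrRight fun _ => finFunctionFinEquiv)
    injective_fun_fin_cast (funext smul_mulVec_spinOfBits)

/-- The map `s ↦ (1/2) Mᵀ (s + U)` is a bijection from the spin configurations
`{-1,1}^{Nα}` onto `{0, 1, …, 2^α - 1}^N` (viewed inside `ℝ^N`). -/
theorem spin_map_bijective (N α : ℕ) (hN : 0 < N) (hα : 0 < α) :
    Set.BijOn
      (fun s : Fin (N * α) → ℝ =>
        (1 / 2 : ℝ) • (encodingMatrix N α)ᵀ.mulVec (s + fun _ => 1))
      {s | ∀ k, s k = -1 ∨ s k = 1}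
      {w | ∀ i, ∃ m : ℕ, m ≤ 2 ^ α - 1 ∧ w i = (m : ℝ)} :=
  spin_map_bijective_general N α
end

section
/- If s* minimizes the Ising energy E_Ising(J, h, s) = -(1/2) sᵀ J s + sᵀ h over s ∈ {-1,1}^{Nα}, with J = -(γ/2) M Σ Mᵀ and h = (γ/2) M Σ Mᵀ U - Mμ, then w* = (1/2) Mᵀ(s* + U) maximizes the utility w ↦ wᵀμ - (γ/2) wᵀ Σ w over w ∈ {0, ..., 2^α - 1}^N. -/
open Matrix

/-- The Ising energy `E(J,h,s) = -(1/2) sᵀ J s + sᵀ h`. -/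
noncomputable def isingEnergy {n : ℕ} (J : Matrix (Fin n) (Fin n) ℝ)
    (h s : Fin n → ℝ) : ℝ :=
  -(1 / 2) * (s ⬝ᵥ J.mulVec s) + s ⬝ᵥ h

lemma sum_testBit_eq {n m : ℕ} (h : m < 2 ^ n) :
    ∑ j : Fin n, (if m.testBit j then 2 ^ (j : ℕ) else 0) = m := by
  induction n generalizing m with
  | zero => interval_cases m; simp
  | succ n ih =>
    rw [Fin.sum_univ_succ]
    have h2 : m / 2 < 2 ^ n := by
      apply Nat.div_lt_of_lt_mul; rw [pow_succ] at h; omega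
    have key : ∑ j : Fin n, (if m.testBit (Fin.succ j) then 2 ^ ((Fin.succ j : Fin (n+1)) : ℕ) else 0)
        = 2 * ∑ j : Fin n, (if (m / 2).testBit j then 2 ^ (j : ℕ) else 0) := by
      rw [Finset.mul_sum]
      refine Finset.sum_congr rfl fun j _ => ?_
      rw [Fin.val_succ, ← Nat.testBit_succ]
      split <;> ring
    rw [key, ih h2]
    have h0 : m.testBit (0 : Fin (n+1)) = decide (m % 2 = 1) := by
      simp [Nat.testBit_zero]
    rw [h0]
    rcases Nat.mod_two_eq_zero_or_one m with hm | hm <;> simp [hm] <;> omega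
def blockIdx {N α : ℕ} (l : Fin N) (j : Fin α) : Fin (N * α) :=
  ⟨(l : ℕ) * α + (j : ℕ), by
    calc (l : ℕ) * α + (j : ℕ) < (l : ℕ) * α + α := by omega
    _ = ((l : ℕ) + 1) * α := by ring
    _ ≤ N * α := Nat.mul_le_mul_right α l.isLt⟩

lemma blockIdx_inj {N α : ℕ} (l : Fin N) : Function.Injective (blockIdx (α := α) l) := by
  intro a b hab
  have := Fin.val_eq_of_eq hab
  simp only [blockIdx] at this
  exact Fin.ext (by omega)

lemma encoding_col_sum (N α : ℕ) (l : Fin N) (v : Fin (N * α) → ℝ) :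
    ((encodingMatrix N α)ᵀ.mulVec v) l = ∑ j : Fin α, 2 ^ (j : ℕ) * v (blockIdx l j) := by
  have : ((encodingMatrix N α)ᵀ.mulVec v) l
      = ∑ k : Fin (N * α), (if (l : ℕ) * α ≤ (k : ℕ) ∧ (k : ℕ) < (l : ℕ) * α + α
          then (2:ℝ) ^ ((k : ℕ) - (l : ℕ) * α) else 0) * v k := by
    simp [Matrix.mulVec, dotProduct, encodingMatrix, Matrix.transpose]
  rw [this]
  set g : Fin (N * α) → ℝ := fun k => (if (l : ℕ) * α ≤ (k : ℕ) ∧ (k : ℕ) < (l : ℕ) * α + α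
          then (2:ℝ) ^ ((k : ℕ) - (l : ℕ) * α) else 0) * v k with hg
  have h1 : ∑ k : Fin (N * α), g k
      = ∑ k ∈ Finset.univ.map ⟨blockIdx l, blockIdx_inj l⟩, g k := by
    refine (Finset.sum_subset (Finset.subset_univ _) ?_).symm
    intro k _ hk
    simp only [Finset.mem_map, Finset.mem_univ, Function.Embedding.coeFn_mk, true_and] at hk
    rw [hg]
    simp only []
    rw [if_neg, zero_mul]
    intro ⟨ha, hb⟩
    exact hk ⟨⟨(k : ℕ) - (l : ℕ) * α, by omega⟩, Fin.ext (by simp [blockIdx]; omega)⟩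
  rw [h1, Finset.sum_map]
  refine Finset.sum_congr rfl fun j _ => ?_
  simp only [Function.Embedding.coeFn_mk, hg]
  have h2 : (l : ℕ) * α ≤ ((blockIdx l j : Fin (N*α)) : ℕ) ∧
      ((blockIdx l j : Fin (N*α)) : ℕ) < (l : ℕ) * α + α := by
    simp [blockIdx]
  rw [if_pos h2]
  congr 1
  simp [blockIdx]
lemma utility_energy_identity {n N : ℕ} (μ : Fin N → ℝ)
    (S : Matrix (Fin N) (Fin N) ℝ) (hS : S.IsSymm) (γ : ℝ)
    (M : Matrix (Fin n) (Fin N) ℝ) (U s : Fin n → ℝ)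
    (w : Fin N → ℝ) (hw : w = (1 / 2 : ℝ) • Mᵀ.mulVec (s + U)) :
    w ⬝ᵥ μ - (γ / 2) * (w ⬝ᵥ S.mulVec w)
      = -(1/2) * isingEnergy ((-(γ / 2)) • (M * S * Mᵀ))
          ((γ / 2) • (M * S * Mᵀ).mulVec U - M.mulVec μ) s
        + ((1/2) * (U ⬝ᵥ M.mulVec μ) - (γ/8) * (U ⬝ᵥ (M * S * Mᵀ).mulVec U)) := by
  set A := M * S * Mᵀ with hA0
  have hA : Aᵀ = A := by
    simp only [hA0, Matrix.transpose_mul, Matrix.transpose_transpose, hS.eq, Matrix.mul_assoc]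
  have hsym : ∀ x y : Fin n → ℝ, x ⬝ᵥ A.mulVec y = y ⬝ᵥ A.mulVec x := by
    intro x y
    rw [Matrix.dotProduct_mulVec]
    nth_rewrite 1 [← hA]
    rw [Matrix.vecMul_transpose, dotProduct_comm]
  have hMdot : ∀ x : Fin n → ℝ, ∀ y : Fin N → ℝ, (Mᵀ.mulVec x) ⬝ᵥ y = x ⬝ᵥ M.mulVec y := by
    intro x y
    rw [Matrix.mulVec_transpose, ← Matrix.dotProduct_mulVec]
  have h1 : w ⬝ᵥ μ = (1/2) * (s ⬝ᵥ M.mulVec μ + U ⬝ᵥ M.mulVec μ) := by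
    rw [hw, smul_dotProduct, hMdot, add_dotProduct]
    simp
  have h2 : w ⬝ᵥ S.mulVec w
      = (1/4) * (s ⬝ᵥ A.mulVec s + 2 * (s ⬝ᵥ A.mulVec U) + U ⬝ᵥ A.mulVec U) := by
    rw [hw, Matrix.mulVec_smul, smul_dotProduct, dotProduct_smul,
      Matrix.mulVec_mulVec, hMdot, Matrix.mulVec_mulVec, ← Matrix.mul_assoc, ← hA0,
      Matrix.mulVec_add, add_dotProduct, dotProduct_add, dotProduct_add,
      hsym U s]
    simp
    ring
  have h3 : s ⬝ᵥ ((-(γ/2)) • A).mulVec s = -(γ/2) * (s ⬝ᵥ A.mulVec s) := by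
    rw [Matrix.smul_mulVec, dotProduct_smul, smul_eq_mul]
  have h4 : s ⬝ᵥ ((γ/2) • A.mulVec U - M.mulVec μ)
      = (γ/2) * (s ⬝ᵥ A.mulVec U) - s ⬝ᵥ M.mulVec μ := by
    rw [dotProduct_sub, dotProduct_smul, smul_eq_mul]
  rw [isingEnergy, h1, h2, h3, h4]
  ring

lemma sum_two_pow (α : ℕ) : ∑ j : Fin α, 2 ^ (j : ℕ) = 2 ^ α - 1 := by
  rw [Fin.sum_univ_eq_sum_range]
  induction α with
  | zero => simp
  | succ n ih => rw [Finset.sum_range_succ, ih]; have := Nat.one_le_two_pow (n := n); rw [pow_succ]; omega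

lemma spin_to_nat {N α : ℕ} (s : Fin (N * α) → ℝ)
    (hs : ∀ k, s k = -1 ∨ s k = 1) (l : Fin N) :
    ∃ m : ℕ, m ≤ 2 ^ α - 1 ∧
      ((1 / 2 : ℝ) • (encodingMatrix N α)ᵀ.mulVec (s + fun _ => 1)) l = (m : ℝ) := by
  refine ⟨∑ j : Fin α, if s (blockIdx l j) = 1 then 2 ^ (j : ℕ) else 0, ?_, ?_⟩
  · calc _ ≤ ∑ j : Fin α, 2 ^ (j : ℕ) := by
          refine Finset.sum_le_sum fun j _ => ?_; split <;> simp
      _ = 2 ^ α - 1 := sum_two_pow α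
  · rw [Pi.smul_apply, encoding_col_sum, smul_eq_mul, Finset.mul_sum, Nat.cast_sum]
    refine Finset.sum_congr rfl fun j _ => ?_
    rcases hs (blockIdx l j) with h | h
    · simp [h, Pi.add_apply]
      norm_num
    · simp [h, Pi.add_apply]
      ring

def natSpin {N α : ℕ} (hα : 0 < α) (m : Fin N → ℕ) : Fin (N * α) → ℝ :=
  fun k => if (m ⟨(k : ℕ) / α, (Nat.div_lt_iff_lt_mul hα).mpr k.isLt⟩).testBit ((k : ℕ) % α)
    then 1 else -1

lemma nat_to_spin {N α : ℕ} (hα : 0 < α) (m : Fin N → ℕ) (hm : ∀ i, m i < 2 ^ α) :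
    ∃ s : Fin (N * α) → ℝ, (∀ k, s k = -1 ∨ s k = 1) ∧
      (1 / 2 : ℝ) • (encodingMatrix N α)ᵀ.mulVec (s + fun _ => 1) = fun i => (m i : ℝ) := by
  refine ⟨natSpin hα m, fun k => by unfold natSpin; split <;> simp, ?_⟩
  funext l
  rw [Pi.smul_apply, encoding_col_sum, smul_eq_mul, Finset.mul_sum]
  have step : ∀ j : Fin α, (1 / 2 : ℝ) * (2 ^ (j : ℕ) *
      (((natSpin hα m + fun _ => 1) : Fin (N * α) → ℝ) (blockIdx l j)))
      = ((if (m l).testBit (j : ℕ) then 2 ^ (j : ℕ) else 0 : ℕ) : ℝ) := by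
    intro j
    have hb : ((blockIdx l j : Fin (N * α)) : ℕ) = α * (l : ℕ) + (j : ℕ) := by
      simp [blockIdx]; ring
    have hd : ((blockIdx l j : Fin (N * α)) : ℕ) / α = (l : ℕ) := by
      rw [hb, Nat.mul_add_div hα, Nat.div_eq_of_lt j.isLt, Nat.add_zero]
    have hmo : ((blockIdx l j : Fin (N * α)) : ℕ) % α = (j : ℕ) := by
      rw [hb, Nat.mul_add_mod, Nat.mod_eq_of_lt j.isLt]
    simp only [Pi.add_apply, natSpin]
    have heq : (⟨((blockIdx l j : Fin (N * α)) : ℕ) / α,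
        (Nat.div_lt_iff_lt_mul hα).mpr (blockIdx l j).isLt⟩ : Fin N) = l := Fin.ext hd
    rw [heq, hmo]
    split <;> push_cast <;> ring
  rw [Finset.sum_congr rfl fun j _ => step j, ← Nat.cast_sum, sum_testBit_eq (hm l)]
/-- If `s*` minimizes the Ising energy with `J = -(γ/2) M Σ Mᵀ` and
`h = (γ/2) M Σ Mᵀ U - Mμ` over spin vectors, then `w* = (1/2) Mᵀ(s* + U)`
maximizes `w ↦ wᵀμ - (γ/2) wᵀ Σ w` over `{0,…,2^α-1}^N`. -/
theorem ising_min_to_markowitz_max (N α : ℕ) (hN : 0 < N) (hα : 0 < α)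
    (μ : Fin N → ℝ) (S : Matrix (Fin N) (Fin N) ℝ) (hS : S.IsSymm) (γ : ℝ)
    (M : Matrix (Fin (N * α)) (Fin N) ℝ) (hM : M = encodingMatrix N α)
    (U : Fin (N * α) → ℝ) (hU : U = fun _ => 1)
    (J : Matrix (Fin (N * α)) (Fin (N * α)) ℝ) (hJ : J = (-(γ / 2)) • (M * S * Mᵀ))
    (h : Fin (N * α) → ℝ) (hh : h = (γ / 2) • (M * S * Mᵀ).mulVec U - M.mulVec μ)
    (sstar : Fin (N * α) → ℝ) (hsstar : ∀ k, sstar k = -1 ∨ sstar k = 1)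
    (hmin : ∀ s : Fin (N * α) → ℝ, (∀ k, s k = -1 ∨ s k = 1) →
      isingEnergy J h sstar ≤ isingEnergy J h s)
    (wstar : Fin N → ℝ) (hwstar : wstar = (1 / 2 : ℝ) • Mᵀ.mulVec (sstar + U)) :
    (∀ i, ∃ m : ℕ, m ≤ 2 ^ α - 1 ∧ wstar i = (m : ℝ)) ∧
    ∀ w : Fin N → ℝ, (∀ i, ∃ m : ℕ, m ≤ 2 ^ α - 1 ∧ w i = (m : ℝ)) →
      w ⬝ᵥ μ - (γ / 2) * (w ⬝ᵥ S.mulVec w) ≤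
        wstar ⬝ᵥ μ - (γ / 2) * (wstar ⬝ᵥ S.mulVec wstar) := by
  subst hM hU hJ hh hwstar
  constructor
  · intro i
    obtain ⟨m, hm1, hm2⟩ := spin_to_nat sstar hsstar i
    exact ⟨m, hm1, hm2⟩
  · intro w hw
    choose m hm1 hm2 using hw
    have hmlt : ∀ i, m i < 2 ^ α := fun i => by
      have h1 := hm1 i
      have h2 := Nat.one_le_two_pow (n := α)
      omega
    obtain ⟨s, hspin, hws⟩ := nat_to_spin hα m hmlt
    have hweq : w = (1 / 2 : ℝ) • (encodingMatrix N α)ᵀ.mulVec (s + fun _ => 1) := by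
      funext i
      rw [hws]
      exact hm2 i
    have hE := hmin s hspin
    have h1 := utility_energy_identity μ S hS γ (encodingMatrix N α) (fun _ => 1) s w hweq
    have h2 := utility_energy_identity μ S hS γ (encodingMatrix N α) (fun _ => 1) sstar
      ((1 / 2 : ℝ) • (encodingMatrix N α)ᵀ.mulVec (sstar + fun _ => 1)) rfl
    linarith
end

section
/- Conversely, if w* maximizes w ↦ wᵀμ - (γ/2) wᵀ Σ w over w ∈ {0, ..., 2^α-1}^N and s* is its spin representation, then s* minimizes E_Ising(J, h, ·) over {-1,1}^{Nα}, with J, h as in the Markowitz–Ising correspondence. -/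
open Matrix

lemma geom2 (n : ℕ) : ∑ j ∈ Finset.range n, 2 ^ j = 2 ^ n - 1 := by
  induction n with
  | zero => simp
  | succ n ih => rw [Finset.sum_range_succ, ih]; have := Nat.one_le_two_pow (n := n); omega

/-- Any spin vector yields a feasible portfolio via the binary encoding. -/
lemma feas (N α : ℕ) (s U : Fin (N * α) → ℝ) (hU : U = fun _ => 1)
    (hs : ∀ k, s k = -1 ∨ s k = 1) (l : Fin N) :
    ∃ m : ℕ, m ≤ 2 ^ α - 1 ∧
      ((1 / 2 : ℝ) • (encodingMatrix N α)ᵀ.mulVec (s + U)) l = (m : ℝ) := by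
  classical
  set m : ℕ := ∑ k : Fin (N * α),
      if ((l : ℕ) * α ≤ (k : ℕ) ∧ (k : ℕ) < (l : ℕ) * α + α) ∧ s k = 1
      then 2 ^ ((k : ℕ) - (l : ℕ) * α) else 0 with hm
  have hblock : (l : ℕ) * α + α ≤ N * α := by
    have : (l : ℕ) + 1 ≤ N := l.2
    calc (l : ℕ) * α + α = ((l : ℕ) + 1) * α := by ring
    _ ≤ N * α := Nat.mul_le_mul_right α this
  have hbound : m ≤ 2 ^ α - 1 := by
    have h1 : m ≤ ∑ k : Fin (N * α),
        (if (l : ℕ) * α ≤ (k : ℕ) ∧ (k : ℕ) < (l : ℕ) * α + α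
          then 2 ^ ((k : ℕ) - (l : ℕ) * α) else 0) := by
      apply Finset.sum_le_sum
      intro k _
      split_ifs <;> simp_all
    have h2 : ∑ k : Fin (N * α),
        (if (l : ℕ) * α ≤ (k : ℕ) ∧ (k : ℕ) < (l : ℕ) * α + α
          then 2 ^ ((k : ℕ) - (l : ℕ) * α) else 0) = 2 ^ α - 1 := by
      rw [Fin.sum_univ_eq_sum_range
        (fun k => if (l : ℕ) * α ≤ k ∧ k < (l : ℕ) * α + α then 2 ^ (k - (l : ℕ) * α) else 0)]
      rw [← Finset.sum_filter]
      have hfil : (Finset.range (N * α)).filter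
          (fun k => (l : ℕ) * α ≤ k ∧ k < (l : ℕ) * α + α)
          = Finset.Ico ((l : ℕ) * α) ((l : ℕ) * α + α) := by
        ext k; simp [Finset.mem_Ico, Finset.mem_filter, Finset.mem_range]; omega
      rw [hfil, Finset.sum_Ico_eq_sum_range]
      simp only [Nat.add_sub_cancel_left, Nat.add_sub_cancel]
      exact geom2 α
    omega
  refine ⟨m, hbound, ?_⟩
  have hcast : ((m : ℕ) : ℝ) = ∑ k : Fin (N * α),
      (if ((l : ℕ) * α ≤ (k : ℕ) ∧ (k : ℕ) < (l : ℕ) * α + α) ∧ s k = 1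
        then (2 : ℝ) ^ ((k : ℕ) - (l : ℕ) * α) else 0) := by
    rw [hm]; push_cast; rfl
  rw [hcast]
  simp only [Pi.smul_apply, smul_eq_mul, Matrix.mulVec, dotProduct, Matrix.transpose_apply,
    Pi.add_apply, hU, encodingMatrix, Finset.mul_sum]
  apply Finset.sum_congr rfl
  intro k _
  rcases hs k with h | h <;> rw [h] <;> split_ifs <;> simp_all <;> ring

/-- Conversely, if `w*` maximizes `w ↦ wᵀμ - (γ/2) wᵀ Σ w` over `{0,…,2^α-1}^N`
and `s*` is its spin representation (`w* = (1/2) Mᵀ(s* + U)`), then `s*`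
minimizes the Ising energy `E(J, h, ·)` over `{-1,1}^{Nα}`. -/
theorem markowitz_max_to_ising_min (N α : ℕ) (hN : 0 < N) (hα : 0 < α)
    (μ : Fin N → ℝ) (S : Matrix (Fin N) (Fin N) ℝ) (hS : S.IsSymm) (γ : ℝ)
    (M : Matrix (Fin (N * α)) (Fin N) ℝ) (hM : M = encodingMatrix N α)
    (U : Fin (N * α) → ℝ) (hU : U = fun _ => 1)
    (J : Matrix (Fin (N * α)) (Fin (N * α)) ℝ) (hJ : J = (-(γ / 2)) • (M * S * Mᵀ))
    (h : Fin (N * α) → ℝ) (hh : h = (γ / 2) • (M * S * Mᵀ).mulVec U - M.mulVec μ)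
    (wstar : Fin N → ℝ) (hwfeas : ∀ i, ∃ m : ℕ, m ≤ 2 ^ α - 1 ∧ wstar i = (m : ℝ))
    (hmax : ∀ w : Fin N → ℝ, (∀ i, ∃ m : ℕ, m ≤ 2 ^ α - 1 ∧ w i = (m : ℝ)) →
      w ⬝ᵥ μ - (γ / 2) * (w ⬝ᵥ S.mulVec w) ≤
        wstar ⬝ᵥ μ - (γ / 2) * (wstar ⬝ᵥ S.mulVec wstar))
    (sstar : Fin (N * α) → ℝ) (hsstar : ∀ k, sstar k = -1 ∨ sstar k = 1)
    (hspin : wstar = (1 / 2 : ℝ) • Mᵀ.mulVec (sstar + U)) :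
    ∀ s : Fin (N * α) → ℝ, (∀ k, s k = -1 ∨ s k = 1) →
      isingEnergy J h sstar ≤ isingEnergy J h s := by
  intro s hs
  have hAsymm : (M * S * Mᵀ)ᵀ = M * S * Mᵀ := by
    rw [Matrix.transpose_mul, Matrix.transpose_mul, Matrix.transpose_transpose, hS.eq,
      Matrix.mul_assoc]
  have swap : ∀ x y : Fin (N * α) → ℝ,
      x ⬝ᵥ (M * S * Mᵀ).mulVec y = y ⬝ᵥ (M * S * Mᵀ).mulVec x := by
    intro x y
    rw [Matrix.dotProduct_mulVec, ← Matrix.mulVec_transpose, hAsymm, dotProduct_comm]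
  have transfer : ∀ x : Fin (N * α) → ℝ, Mᵀ.mulVec x ⬝ᵥ μ = x ⬝ᵥ M.mulVec μ := by
    intro x; rw [Matrix.mulVec_transpose, ← Matrix.dotProduct_mulVec]
  have quad : ∀ x y : Fin (N * α) → ℝ,
      Mᵀ.mulVec x ⬝ᵥ S.mulVec (Mᵀ.mulVec y) = x ⬝ᵥ (M * S * Mᵀ).mulVec y := by
    intro x y
    rw [Matrix.mulVec_transpose, ← Matrix.dotProduct_mulVec, Matrix.mulVec_mulVec,
      Matrix.mulVec_mulVec]
  have key : ∀ t : Fin (N * α) → ℝ,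
      isingEnergy J h t =
        -2 * (((1 / 2 : ℝ) • Mᵀ.mulVec (t + U)) ⬝ᵥ μ -
            (γ / 2) * (((1 / 2 : ℝ) • Mᵀ.mulVec (t + U)) ⬝ᵥ
              S.mulVec ((1 / 2 : ℝ) • Mᵀ.mulVec (t + U)))) +
          (U ⬝ᵥ M.mulVec μ - (γ / 4) * (U ⬝ᵥ (M * S * Mᵀ).mulVec U)) := by
    intro t
    have e1 : ((1 / 2 : ℝ) • Mᵀ.mulVec (t + U)) ⬝ᵥ μ
        = (1 / 2) * (t ⬝ᵥ M.mulVec μ + U ⬝ᵥ M.mulVec μ) := by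
      rw [smul_dotProduct, Matrix.mulVec_add, add_dotProduct, transfer, transfer, smul_eq_mul]
    have e2 : ((1 / 2 : ℝ) • Mᵀ.mulVec (t + U)) ⬝ᵥ
          S.mulVec ((1 / 2 : ℝ) • Mᵀ.mulVec (t + U))
        = (1 / 4) * (t ⬝ᵥ (M * S * Mᵀ).mulVec t + 2 * (t ⬝ᵥ (M * S * Mᵀ).mulVec U)
            + U ⬝ᵥ (M * S * Mᵀ).mulVec U) := by
      rw [smul_dotProduct, Matrix.mulVec_smul, dotProduct_smul, Matrix.mulVec_add,
        Matrix.mulVec_add, add_dotProduct, dotProduct_add, dotProduct_add,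
        quad, quad, quad, quad, swap U t, smul_eq_mul, smul_eq_mul]
      ring
    have e3 : isingEnergy J h t
        = (γ / 4) * (t ⬝ᵥ (M * S * Mᵀ).mulVec t)
          + (γ / 2) * (t ⬝ᵥ (M * S * Mᵀ).mulVec U) - t ⬝ᵥ M.mulVec μ := by
      rw [isingEnergy, hJ, hh, Matrix.smul_mulVec, dotProduct_smul,
        dotProduct_sub, dotProduct_smul, smul_eq_mul, smul_eq_mul]
      ring
    rw [e1, e2, e3]; ring
  rw [key sstar, key s, ← hspin]
  have hle := hmax ((1 / 2 : ℝ) • Mᵀ.mulVec (s + U))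
    (fun i => by rw [hM]; exact feas N α s U hU hs i)
  linarith
end
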